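/- Let 1 ≤ d < n and let G_{n,d} := K_d ∨ \overline{K}_{n−d} be the join of a complete graph on d vertices with an edgeless graph on n−d vertices (an n-vertex d-degenerate graph). Then for every integer k with n ≤ k ≤ n+d−1−((n+d−1) mod 2), the graph G_{n,d} is not equitably DP k-colorable; that is, there exists a k-cover H of G_{n,d} admitting no 1-bounded H-coloring. In particular, for n ≤ k ≤ 2n−2 the complete graph K_n = G_{n,n−1} is not EDP k-colorable. -/
import Mathlib


/-- A DP-cover (correspondence cover) of a graph `G` with colors in `Γ`:
lists `L v`, and a symmetric adjacency relation between nodes `(v, γ)`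
that projects to edges of `G` and is a partial matching between fibers. -/
structure DPCover {V : Type*} (G : SimpleGraph V) (Γ : Type*) where
  L : V → Finset Γ
  Adj : V × Γ → V × Γ → Prop
  symm : ∀ p q, Adj p q → Adj q p
  adj_sub : ∀ u α w β, Adj (u, α) (w, β) → G.Adj u w ∧ α ∈ L u ∧ β ∈ L w
  matching : ∀ u α w β β', Adj (u, α) (w, β) → Adj (u, α) (w, β') → β = β'

/-- `H` is a `k`-cover: every list has size `k`. -/
def DPCover.IsKCover {V Γ : Type*} {G : SimpleGraph V} (H : DPCover G Γ) (k : ℕ) : Prop :=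
  ∀ v, (H.L v).card = k

/-- An `H`-coloring: a choice from every list whose graph is independent in the cover. -/
def DPCover.IsColoring {V Γ : Type*} {G : SimpleGraph V} (H : DPCover G Γ) (f : V → Γ) : Prop :=
  (∀ v, f v ∈ H.L v) ∧ ∀ u w, ¬ H.Adj (u, f u) (w, f w)

/-- The size of the color class of `γ` under `f`. -/
def classSize {V Γ : Type*} [Fintype V] [DecidableEq Γ] (f : V → Γ) (γ : Γ) : ℕ :=
  (Finset.univ.filter fun v => f v = γ).card

/-- Every color class has size at most `m`. -/
def IsBounded {V Γ : Type*} [Fintype V] [DecidableEq Γ] (m : ℕ) (f : V → Γ) : Prop :=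
  ∀ γ, classSize f γ ≤ m

/-- `f` is `⌈n/k⌉`-bounded and at most `n % k` color classes have size `⌊n/k⌋ + 1`. -/
def IsStronglyBounded {V Γ : Type*} [Fintype V] [DecidableEq Γ] (n k : ℕ) (f : V → Γ) : Prop :=
  IsBounded ((n + k - 1) / k) f ∧
  ((Finset.univ.image f).filter fun γ => classSize f γ = n / k + 1).card ≤ n % k

/-- `G` is equitably DP `k`-colorable: every `k`-cover admits a `⌈n/k⌉`-bounded coloring. -/
def EDPColorable {V : Type*} [Fintype V] (G : SimpleGraph V) (k : ℕ) : Prop :=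
  ∀ H : DPCover G ℕ, H.IsKCover k →
    ∃ f, H.IsColoring f ∧ IsBounded ((Fintype.card V + k - 1) / k) f

/-- `G` is strongly equitably DP `k`-colorable: every `k`-cover admits a strongly
`⌈n/k⌉`-bounded coloring. -/
def SEDPColorable {V : Type*} [Fintype V] (G : SimpleGraph V) (k : ℕ) : Prop :=
  ∀ H : DPCover G ℕ, H.IsKCover k →
    ∃ f, H.IsColoring f ∧ IsStronglyBounded (Fintype.card V) k f

/-- `G_{n,d} = K_d ∨ K̄_{n-d}`: the join of a complete graph on the first `d`
vertices with an edgeless graph on the remaining `n - d` vertices. -/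
def joinGraph (n d : ℕ) : SimpleGraph (Fin n) :=
  SimpleGraph.fromRel (fun a _ => a.val < d)

/-- Pairing involution on `{0,…,k-1}`: swaps `2i ↔ 2i+1`, fixing `k-1` when `k` is odd. -/
def pairInv (k c : ℕ) : ℕ :=
  if c % 2 = 1 then c - 1 else if c + 1 < k then c + 1 else c

lemma pairInv_lt {k c : ℕ} (h : c < k) : pairInv k c < k := by
  unfold pairInv; split_ifs <;> omega

lemma pairInv_pairInv {k c : ℕ} (h : c < k) : pairInv k (pairInv k c) = c := by
  unfold pairInv; split_ifs <;> omega

/-- The bad `k`-cover: all lists are `{0,…,k-1}`, and along every edge with an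
endpoint in the clique part, the matching pairs color `c` with `pairInv k c`. -/
def badCover {n : ℕ} (d k : ℕ) (G : SimpleGraph (Fin n)) : DPCover G ℕ where
  L _ := Finset.range k
  Adj p q := G.Adj p.1 q.1 ∧
    ((p.1.val < d ∧ p.2 < k ∧ q.2 = pairInv k p.2) ∨
     (q.1.val < d ∧ q.2 < k ∧ p.2 = pairInv k q.2))
  symm p q h := ⟨h.1.symm, h.2.symm⟩
  adj_sub := by
    rintro u α w β ⟨hadj, ⟨_, h1, h2⟩ | ⟨_, h1, h2⟩⟩ <;> dsimp only at h1 h2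
    · exact ⟨hadj, Finset.mem_range.mpr h1, Finset.mem_range.mpr (h2 ▸ pairInv_lt h1)⟩
    · exact ⟨hadj, Finset.mem_range.mpr (h2 ▸ pairInv_lt h1), Finset.mem_range.mpr h1⟩
  matching := by
    rintro u α w β β' ⟨_, h1⟩ ⟨_, h2⟩
    dsimp only at h1 h2
    rcases h1 with ⟨_, ha, hb⟩ | ⟨_, hb, ha⟩ <;>
      rcases h2 with ⟨_, ha', hb'⟩ | ⟨_, hb', ha'⟩
    · rw [hb, hb']
    · rw [hb, ha', pairInv_pairInv hb']
    · rw [hb', ha, pairInv_pairInv hb]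
    · rw [← pairInv_pairInv hb, ← ha, ha', pairInv_pairInv hb']

lemma not_EDP_aux (n d k : ℕ) (hd : 1 ≤ d) (hdn : d < n) (hnk : n ≤ k)
    (hk : k ≤ n + d - 1 - ((n + d - 1) % 2))
    (G : SimpleGraph (Fin n))
    (hG : ∀ a b : Fin n, a ≠ b → a.val < d → G.Adj a b) :
    ¬ EDPColorable G k := by
  classical
  intro hEDP
  obtain ⟨f, hf, hbdd⟩ := hEDP (badCover d k G) (fun _ => Finset.card_range k)
  have hk0 : 0 < k := by omega
  -- the bound is 1
  have hdiv : (Fintype.card (Fin n) + k - 1) / k = 1 := by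
    rw [Fintype.card_fin]
    have h1 : 1 ≤ (n + k - 1) / k := (Nat.le_div_iff_mul_le hk0).mpr (by omega)
    have h2 : (n + k - 1) / k < 2 := (Nat.div_lt_iff_lt_mul hk0).mpr (by omega)
    omega
  rw [hdiv] at hbdd
  -- f is injective
  have hinj : Function.Injective f := by
    intro u w huw
    by_contra hne
    have hsub : ({u, w} : Finset (Fin n)) ⊆ Finset.univ.filter (fun v => f v = f u) := by
      intro x hx
      rcases Finset.mem_insert.mp hx with rfl | hx
      · simp
      · rw [Finset.mem_singleton] at hx
        subst hx
        simp [huw.symm]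
    have h2 : 2 ≤ classSize f (f u) :=
      (Finset.card_pair hne) ▸ Finset.card_le_card hsub
    have := hbdd (f u)
    omega
  have hmem : ∀ v, f v < k := fun v => Finset.mem_range.mp (hf.1 v)
  -- the main sets
  set Clq : Finset (Fin n) := Finset.univ.filter (fun v => v.val < d) with hClq
  have hClqcard : Clq.card = d := by
    have himg : Clq.image Fin.val = Finset.range d := by
      ext x
      simp only [Finset.mem_image, Finset.mem_range, hClq, Finset.mem_filter,
        Finset.mem_univ, true_and]
      constructor
      · rintro ⟨v, hv, rfl⟩; exact hv
      · intro hx; exact ⟨⟨x, lt_trans hx hdn⟩, hx, rfl⟩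
    have := Finset.card_image_of_injective Clq Fin.val_injective
    rw [himg, Finset.card_range] at this
    omega
  set A : Finset ℕ := Clq.image f with hA
  set B : Finset ℕ := (Finset.univ.filter (fun v : Fin n => ¬ v.val < d)).image f with hB
  set P : Finset ℕ := A.filter (fun c => ¬ pairInv k c = c) with hP
  set Q : Finset ℕ := P.image (pairInv k) with hQ
  have hAk : ∀ c ∈ A, c < k := by
    rintro c hc
    obtain ⟨v, _, rfl⟩ := Finset.mem_image.mp hc
    exact hmem v
  have hABf : ∀ c ∈ A ∪ B, ∃ w, f w = c := by
    intro c hc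
    rcases Finset.mem_union.mp hc with h | h
    · obtain ⟨v, _, rfl⟩ := Finset.mem_image.mp h; exact ⟨v, rfl⟩
    · obtain ⟨v, _, rfl⟩ := Finset.mem_image.mp h; exact ⟨v, rfl⟩
  have hAcard : A.card = d := by
    rw [hA, Finset.card_image_of_injective _ hinj, hClqcard]
  have hBcard : B.card = n - d := by
    rw [hB, Finset.card_image_of_injective _ hinj]
    have := Finset.card_filter_add_card_filter_not
      (s := (Finset.univ : Finset (Fin n))) (p := fun v => v.val < d)
    rw [Finset.card_univ, Fintype.card_fin] at this
    rw [← hClq] at this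
    omega
  have hQcard : Q.card = P.card := by
    rw [hQ]
    apply Finset.card_image_of_injOn
    intro c hc c' hc' hcc
    have h1 : c < k := hAk c (Finset.mem_filter.mp hc).1
    have h2 : c' < k := hAk c' (Finset.mem_filter.mp hc').1
    rw [← pairInv_pairInv h1, hcc, pairInv_pairInv h2]
  -- disjointness
  have hAB : Disjoint A B := by
    rw [Finset.disjoint_left]
    intro c hcA hcB
    obtain ⟨u, hu, hfu⟩ := Finset.mem_image.mp hcA
    obtain ⟨v, hv, hfv⟩ := Finset.mem_image.mp hcB
    have : u = v := hinj (hfu.trans hfv.symm)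
    subst this
    rw [hClq, Finset.mem_filter] at hu
    rw [Finset.mem_filter] at hv
    exact hv.2 hu.2
  have hQAB : Disjoint Q (A ∪ B) := by
    rw [Finset.disjoint_left]
    intro x hxQ hxAB
    obtain ⟨c, hcP, rfl⟩ := Finset.mem_image.mp hxQ
    rw [hP, Finset.mem_filter] at hcP
    obtain ⟨hcA, hcne⟩ := hcP
    obtain ⟨u, hu, hfu⟩ := Finset.mem_image.mp hcA
    obtain ⟨w, hfw⟩ := hABf _ hxAB
    rw [hClq, Finset.mem_filter] at hu
    have huw : u ≠ w := by
      intro h; subst h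
      rw [hfu] at hfw
      exact hcne hfw.symm
    have hadj : G.Adj u w := hG u w huw hu.2
    exact hf.2 u w ⟨hadj, Or.inl ⟨hu.2, hfu ▸ hAk c hcA, by rw [hfw, hfu]⟩⟩
  -- total count
  have hunion : (A ∪ B ∪ Q).card = A.card + B.card + Q.card := by
    rw [Finset.card_union_of_disjoint hQAB.symm, Finset.card_union_of_disjoint hAB]
  have hsubk : A ∪ B ∪ Q ⊆ Finset.range k := by
    intro x hx
    rw [Finset.mem_range]
    rcases Finset.mem_union.mp hx with h | h
    · rcases Finset.mem_union.mp h with h' | h'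
      · exact hAk x h'
      · obtain ⟨v, _, rfl⟩ := Finset.mem_image.mp h'; exact hmem v
    · obtain ⟨c, hc, rfl⟩ := Finset.mem_image.mp h
      exact pairInv_lt (hAk c (Finset.mem_filter.mp hc).1)
  have htotal : A.card + B.card + Q.card ≤ k := by
    rw [← hunion]
    simpa using Finset.card_le_card hsubk
  -- lower bound on P.card
  have key : ∀ a ∈ A.filter (fun c => pairInv k c = c), a + 1 = k ∧ a % 2 = 0 := by
    intro a ha
    rw [Finset.mem_filter] at ha
    have hak := hAk a ha.1
    have h2 := ha.2
    unfold pairInv at h2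
    split_ifs at h2 <;> omega
  have hfixcard : (A.filter fun c => pairInv k c = c).card ≤ k % 2 := by
    rcases Nat.mod_two_eq_zero_or_one k with h | h
    · have hempty : A.filter (fun c => pairInv k c = c) = ∅ := by
        rw [Finset.eq_empty_iff_forall_notMem]
        intro a ha
        have := key a ha
        omega
      rw [hempty]
      simp
    · rw [h]
      refine Finset.card_le_one.mpr fun a ha b hb => ?_
      have h1 := key a ha
      have h2 := key b hb
      omega
  have hsplit : (A.filter fun c => pairInv k c = c).card + P.card = A.card := by
    rw [hP]
    exact Finset.card_filter_add_card_filter_not (fun c => pairInv k c = c)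
  omega

/-- For `1 ≤ d < n` and `n ≤ k ≤ n + d - 1 - ((n + d - 1) mod 2)`, the `n`-vertex
`d`-degenerate graph `G_{n,d} = K_d ∨ K̄_{n-d}` is not equitably DP `k`-colorable:
some `k`-cover admits no 1-bounded coloring.  In particular, for `n ≤ k ≤ 2n - 2`,
the complete graph `K_n = G_{n,n-1}` is not EDP `k`-colorable. -/
theorem joinGraph_not_EDP_colorable :
    (∀ n d k : ℕ, 1 ≤ d → d < n → n ≤ k → k ≤ n + d - 1 - ((n + d - 1) % 2) →
      ¬ EDPColorable (joinGraph n d) k) ∧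
    (∀ n k : ℕ, 2 ≤ n → n ≤ k → k ≤ 2 * n - 2 →
      ¬ EDPColorable (⊤ : SimpleGraph (Fin n)) k) := by
  constructor
  · intro n d k hd hdn hnk hk
    refine not_EDP_aux n d k hd hdn hnk hk _ (fun a b hne had => ?_)
    rw [joinGraph, SimpleGraph.fromRel_adj]
    exact ⟨hne, Or.inl had⟩
  · intro n k hn hnk hk
    refine not_EDP_aux n (n - 1) k (by omega) (by omega) hnk (by omega) _
      (fun a b hne _ => ?_)
    exact hne
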